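/- arXiv:2407.03983 — 3 statements merged into one kernel-verified Lean document; each statement's English description precedes it below -/
import Mathlib

section
/- Let 0 ≤ α < n, Q be a cube in ℝⁿ, and f be locally integrable. Then for all x ∈ Q one has M_α(f χ_Q)(x) = M_{α,Q}(f)(x), i.e., the fractional maximal function of f χ_Q agrees on Q with the local fractional maximal function relative to Q. -/
open MeasureTheory Set

noncomputable section

/-- An axis-parallel cube in `ℝⁿ` with positive side length. -/
def IsCube {n : ℕ} (Q : Set (Fin n → ℝ)) : Prop :=
  ∃ (a : Fin n → ℝ) (l : ℝ), 0 < l ∧ Q = Set.Icc a (fun i => a i + l)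

/-- The average `f_Q` of a function over a set. -/
def avgOn {n : ℕ} (Q : Set (Fin n → ℝ)) (b : (Fin n → ℝ) → ℝ) : ℝ :=
  (volume Q).toReal⁻¹ * ∫ y in Q, b y

/-- The fractional maximal operator `M_α` (sup over axis-parallel cubes containing `x`). -/
def fracMax {n : ℕ} (α : ℝ) (f : (Fin n → ℝ) → ℝ) (x : Fin n → ℝ) : ℝ :=
  ⨆ Q : {Q : Set (Fin n → ℝ) // IsCube Q ∧ x ∈ Q},
    (volume Q.1).toReal ^ (α / n - 1) * ∫ y in Q.1, |f y|

/-- The local fractional maximal operator `M_{α,Q}` relative to a cube `Q`. -/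
def fracMaxLoc {n : ℕ} (α : ℝ) (Q : Set (Fin n → ℝ)) (f : (Fin n → ℝ) → ℝ)
    (x : Fin n → ℝ) : ℝ :=
  ⨆ Q₀ : {Q₀ : Set (Fin n → ℝ) // IsCube Q₀ ∧ x ∈ Q₀ ∧ Q₀ ⊆ Q},
    (volume Q₀.1).toReal ^ (α / n - 1) * ∫ y in Q₀.1, |f y|

/-- The Fefferman–Stein sharp maximal operator `M^♯`. -/
def sharpMax {n : ℕ} (f : (Fin n → ℝ) → ℝ) (x : Fin n → ℝ) : ℝ :=
  ⨆ Q : {Q : Set (Fin n → ℝ) // IsCube Q ∧ x ∈ Q},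
    (volume Q.1).toReal⁻¹ * ∫ y in Q.1, |f y - avgOn Q.1 f|

/-- The maximal commutator `M_{α,b}`. -/
def maxComm {n : ℕ} (α : ℝ) (b f : (Fin n → ℝ) → ℝ) (x : Fin n → ℝ) : ℝ :=
  ⨆ Q : {Q : Set (Fin n → ℝ) // IsCube Q ∧ x ∈ Q},
    (volume Q.1).toReal ^ (α / n - 1) * ∫ y in Q.1, |b x - b y| * |f y|

/-- The axis-parallel cube centered at `x` with side length `t`. -/
def centeredCube {n : ℕ} (x : Fin n → ℝ) (t : ℝ) : Set (Fin n → ℝ) :=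
  Set.Icc (fun i => x i - t / 2) (fun i => x i + t / 2)

/-- The norm of the slice space `(E_r^p)_t(ℝⁿ)`. -/
def sliceNorm {n : ℕ} (r p t : ℝ) (f : (Fin n → ℝ) → ℝ) : ℝ :=
  (∫ x, ((volume (centeredCube x t)).toReal⁻¹ *
      ∫ y in centeredCube x t, |f y| ^ r) ^ (p / r)) ^ (1 / p)

/-! A cube `Q'` through `x` meets `Q` inside a subcube `Q₀ ⊆ Q` of side `min ℓ(Q) ℓ(Q')`, which
still contains `x`. Since `α / n - 1 ≤ 0`, shrinking the cube only increases the weight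
`|Q₀| ^ (α / n - 1)`, so each term of `M_α (f χ_Q) x` is dominated by a term of `M_{α,Q} f x`;
conversely a subcube of `Q` contributes the same term to both suprema. -/

lemma Real.div_natCast_sub_one_nonpos {α : ℝ} {n : ℕ} (h : α < n) : α / n - 1 ≤ 0 := by
  rcases n.eq_zero_or_pos with rfl | hn
  · simp
  · rw [sub_nonpos, div_le_one (by positivity)]
    exact h.le

lemma Real.volume_Icc_add_const_toReal {ι : Type*} [Fintype ι] (a : ι → ℝ) {l : ℝ} (hl : 0 ≤ l) :
    (volume (Icc a fun i => a i + l)).toReal = l ^ Fintype.card ι := by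
  rw [Real.volume_Icc_pi_toReal fun i => by simpa using hl]
  simp

lemma Real.exists_Icc_inter_Icc_subset_Icc_min_subset (a a' l l' : ℝ) :
    ∃ c, Icc a (a + l) ∩ Icc a' (a' + l') ⊆ Icc c (c + min l l') ∧
      Icc c (c + min l l') ⊆ Icc a (a + l) := by
  -- the interval of length `min l l'` in `[a, a + l]` starting at `max a a'`, or as close to it as fits
  refine ⟨min (max a a') (a + l - min l l'), ?_, ?_⟩
  · rintro y ⟨⟨hay, hya⟩, ⟨hay', hya'⟩⟩
    refine ⟨(min_le_left _ _).trans (max_le hay hay'), ?_⟩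
    rw [← min_add_add_right, sub_add_cancel]
    refine le_min ?_ hya
    rcases le_total l l' with h | h
    · rw [min_eq_left h]; linarith [le_max_left a a']
    · rw [min_eq_right h]; linarith [le_max_right a a']
  · rintro y ⟨hcy, hyc⟩
    have : min (max a a') (a + l - min l l') + min l l' ≤ a + l := by
      linarith [min_le_right (max a a') (a + l - min l l')]
    refine ⟨le_trans ?_ hcy, hyc.trans this⟩
    exact le_min (le_max_left _ _) (by linarith [min_le_left l l'])

namespace IsCube

variable {n : ℕ} {Q Q' : Set (Fin n → ℝ)}

lemma isCompact (hQ : IsCube Q) : IsCompact Q := by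
  obtain ⟨a, l, -, rfl⟩ := hQ
  exact isCompact_Icc

lemma measurableSet (hQ : IsCube Q) : MeasurableSet Q := by
  obtain ⟨a, l, -, rfl⟩ := hQ
  exact measurableSet_Icc

lemma volume_toReal_pos (hQ : IsCube Q) : 0 < (volume Q).toReal := by
  obtain ⟨a, l, hl, rfl⟩ := hQ
  rw [Real.volume_Icc_add_const_toReal a hl.le]
  positivity

lemma exists_isCube_inter_subset (hQ : IsCube Q) (hQ' : IsCube Q') :
    ∃ Q₀, IsCube Q₀ ∧ Q ∩ Q' ⊆ Q₀ ∧ Q₀ ⊆ Q ∧ (volume Q₀).toReal ≤ (volume Q').toReal := by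
  obtain ⟨a, l, hl, rfl⟩ := hQ
  obtain ⟨a', l', hl', rfl⟩ := hQ'
  choose c hc using fun i => Real.exists_Icc_inter_Icc_subset_Icc_min_subset (a i) (a' i) l l'
  refine ⟨Icc c fun i => c i + min l l', ⟨c, _, lt_min hl hl', rfl⟩, ?_, ?_, ?_⟩
  · simp only [← pi_univ_Icc, ← pi_inter_distrib]
    exact pi_mono fun i _ => (hc i).1
  · simp only [← pi_univ_Icc]
    exact pi_mono fun i _ => (hc i).2
  · simp only [Real.volume_Icc_add_const_toReal _ hl'.le,
      Real.volume_Icc_add_const_toReal _ (lt_min hl hl').le]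
    exact pow_le_pow_left₀ (lt_min hl hl').le (min_le_right l l') _

end IsCube

lemma MeasureTheory.setIntegral_abs_indicator {α : Type*} [MeasurableSpace α] {μ : Measure α}
    {s t : Set α} (hs : MeasurableSet s) (f : α → ℝ) :
    ∫ y in t, |s.indicator f y| ∂μ = ∫ y in t ∩ s, |f y| ∂μ := by
  rw [← setIntegral_indicator hs]
  congr 1 with y
  exact (congrFun (indicator_comp_of_zero (g := abs) abs_zero) y).symm

lemma IsCube.exists_isCube_subset_integral_abs_indicator_le {n : ℕ} {e : ℝ} (he : e ≤ 0)
    {Q Q' : Set (Fin n → ℝ)} (hQ : IsCube Q) (hQ' : IsCube Q') {f : (Fin n → ℝ) → ℝ}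
    (hf : IntegrableOn f Q) :
    ∃ Q₀, IsCube Q₀ ∧ Q ∩ Q' ⊆ Q₀ ∧ Q₀ ⊆ Q ∧
      (volume Q').toReal ^ e * ∫ y in Q', |Q.indicator f y| ≤
        (volume Q₀).toReal ^ e * ∫ y in Q₀, |f y| := by
  obtain ⟨Q₀, hQ₀, hQQ'Q₀, hQ₀Q, hvol⟩ := hQ.exists_isCube_inter_subset hQ'
  refine ⟨Q₀, hQ₀, hQQ'Q₀, hQ₀Q, ?_⟩
  rw [setIntegral_abs_indicator hQ.measurableSet, inter_comm]
  gcongr ?_ * ?_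
  · exact Real.rpow_le_rpow_of_nonpos hQ₀.volume_toReal_pos hvol he
  · exact setIntegral_mono_set (hf.mono_set hQ₀Q).abs (ae_of_all _ fun y => abs_nonneg _)
      (ae_of_all _ hQQ'Q₀)

theorem stmt2_general {n : ℕ} (α : ℝ) (hαn : α < n)
    (Q : Set (Fin n → ℝ)) (hQ : IsCube Q)
    (f : (Fin n → ℝ) → ℝ) (hf : LocallyIntegrable f volume)
    (x : Fin n → ℝ) (hx : x ∈ Q) :
    fracMax α (Q.indicator f) x = fracMaxLoc α Q f x := by
  rw [fracMax, fracMaxLoc, iSup, iSup]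
  refine csSup_eq_csSup_of_forall_exists_le ?_ ?_
  · rintro _ ⟨⟨Q', hQ', hxQ'⟩, rfl⟩
    obtain ⟨Q₀, hQ₀, hQQ'Q₀, hQ₀Q, hle⟩ :=
      hQ.exists_isCube_subset_integral_abs_indicator_le (Real.div_natCast_sub_one_nonpos hαn) hQ'
        (hf.integrableOn_isCompact hQ.isCompact)
    exact ⟨_, ⟨⟨Q₀, hQ₀, hQQ'Q₀ ⟨hx, hxQ'⟩, hQ₀Q⟩, rfl⟩, hle⟩
  · rintro _ ⟨⟨Q₀, hQ₀, hxQ₀, hQ₀Q⟩, rfl⟩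
    refine ⟨_, ⟨⟨Q₀, hQ₀, hxQ₀⟩, rfl⟩, le_of_eq ?_⟩
    dsimp only
    rw [setIntegral_abs_indicator hQ.measurableSet, inter_eq_left.mpr hQ₀Q]

theorem stmt2 {n : ℕ} (α : ℝ) (hα : 0 ≤ α) (hαn : α < n)
    (Q : Set (Fin n → ℝ)) (hQ : IsCube Q)
    (f : (Fin n → ℝ) → ℝ) (hf : LocallyIntegrable f volume)
    (x : Fin n → ℝ) (hx : x ∈ Q) :
    fracMax α (Q.indicator f) x = fracMaxLoc α Q f x :=
  stmt2_general α hαn Q hQ f hf x hx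
end
end

section
/- Let 0 < β < 1, 0 < α < n with α + β < n, and b ∈ Λ̇_β(ℝⁿ). Then for every cube Q and every x ∈ Q, | |Q|^{−α/n} M_{α,Q}(b)(x) − M_Q(b)(x) | ≤ C ‖b‖_{Λ̇_β} |Q|^{β/n}, with C depending only on n, α, β. -/
open MeasureTheory Set

noncomputable section

lemma holder_cont {n : ℕ} {b : (Fin n → ℝ) → ℝ} {L β : ℝ} (hβ : 0 < β)
    (hb : ∀ x y, |b x - b y| ≤ L * ‖x - y‖ ^ β) : Continuous b := by
  rw [continuous_iff_continuousAt]
  intro x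
  rw [ContinuousAt, tendsto_iff_dist_tendsto_zero]
  have h0 : Filter.Tendsto (fun y : (Fin n → ℝ) => ‖y - x‖) (nhds x) (nhds 0) := by
    simpa using ((continuous_id.sub (continuous_const (y := x))).norm.tendsto x)
  have h2 : Filter.Tendsto (fun t : ℝ => L * t ^ β) (nhds 0) (nhds 0) := by
    have := ((Real.continuousAt_rpow_const 0 β (Or.inr hβ.le)).tendsto).const_mul L
    simpa [Real.zero_rpow hβ.ne'] using this
  exact squeeze_zero (fun y => dist_nonneg)
    (fun y => by simpa [Real.dist_eq] using hb y x) (h2.comp h0)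

theorem stmt14 {n : ℕ} (α β : ℝ) (hβ0 : 0 < β) (hβ1 : β < 1)
    (hα : 0 < α) (hαn : α < n) (hαβn : α + β < n) :
    ∃ C > 0, ∀ (b : (Fin n → ℝ) → ℝ) (L : ℝ), 0 ≤ L →
      (∀ x y, |b x - b y| ≤ L * ‖x - y‖ ^ β) →
      ∀ Q : Set (Fin n → ℝ), IsCube Q → ∀ x ∈ Q,
        |(volume Q).toReal ^ (-(α / n)) * fracMaxLoc α Q b x - fracMaxLoc 0 Q b x| ≤
          C * L * (volume Q).toReal ^ (β / n) := by
  have hn : (0:ℝ) < n := lt_trans hα hαn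
  refine ⟨2, by norm_num, ?_⟩
  intro b L hL hb Q hQ x hx
  have hc : Continuous b := holder_cont hβ0 hb
  obtain ⟨a, l, hl, hQeq⟩ := hQ
  set v : ℝ := (volume Q).toReal with hvdef
  have hale : a ≤ fun i => a i + l := fun i => by dsimp; linarith
  have hvl : v = l ^ n := by
    rw [hvdef, hQeq, Real.volume_Icc_pi_toReal hale]
    simp [Finset.prod_const]
  have hv : 0 < v := by rw [hvl]; positivity
  have hvfin : volume Q ≠ ⊤ := by
    rw [hQeq]; exact (isCompact_Icc.measure_lt_top).ne
  -- diameter bound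
  have hdiam : ∀ y ∈ Q, ∀ z ∈ Q, ‖y - z‖ ≤ l := by
    intro y hy z hz
    rw [hQeq] at hy hz
    rw [pi_norm_le_iff_of_nonneg hl.le]
    intro i
    have h1 := hy.1 i; have h2 := hy.2 i; have h3 := hz.1 i; have h4 := hz.2 i
    simp only [Pi.sub_apply, Real.norm_eq_abs]
    rw [abs_sub_le_iff]
    constructor <;> dsimp at h2 h4 <;> linarith
  set D : ℝ := L * v ^ (β / n) with hDdef
  have hlv : l ^ β = v ^ (β / n) := by
    rw [hvl, ← Real.rpow_natCast l n, ← Real.rpow_mul hl.le]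
    congr 1
    field_simp
  have hD0 : 0 ≤ D := mul_nonneg hL (Real.rpow_nonneg hv.le _)
  have hbd : ∀ y ∈ Q, |b x| - D ≤ |b y| ∧ |b y| ≤ |b x| + D := by
    intro y hy
    have hkey : |b y - b x| ≤ D := by
      calc |b y - b x| ≤ L * ‖y - x‖ ^ β := hb y x
        _ ≤ L * l ^ β := by
            exact mul_le_mul_of_nonneg_left
              (Real.rpow_le_rpow (norm_nonneg _) (hdiam y hy x hx) hβ0.le) hL
        _ = D := by rw [hlv]
    have e1 : |b y| - |b x| ≤ |b y - b x| := abs_sub_abs_le_abs_sub _ _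
    have e2 : |b x| - |b y| ≤ |b x - b y| := abs_sub_abs_le_abs_sub _ _
    rw [abs_sub_comm] at e2
    constructor <;> linarith
  -- facts about subcubes
  have cube_facts : ∀ Q₀ : Set (Fin n → ℝ), IsCube Q₀ → Q₀ ⊆ Q →
      0 < (volume Q₀).toReal ∧ (volume Q₀).toReal ≤ v ∧
      0 ≤ (∫ y in Q₀, |b y|) ∧
      (∫ y in Q₀, |b y|) ≤ (volume Q₀).toReal * (|b x| + D) := by
    intro Q₀ hQ₀ hsub
    obtain ⟨a₀, l₀, hl₀, rfl⟩ := hQ₀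
    have hale₀ : a₀ ≤ fun i => a₀ i + l₀ := fun i => by dsimp; linarith
    have hv₀ : 0 < (volume (Icc a₀ fun i => a₀ i + l₀)).toReal := by
      rw [Real.volume_Icc_pi_toReal hale₀]
      have : ∀ i ∈ Finset.univ (α := Fin n), (0:ℝ) < (a₀ i + l₀) - a₀ i := by
        intro i _; linarith
      simpa using Finset.prod_pos this
    refine ⟨hv₀, ?_, ?_, ?_⟩
    · exact ENNReal.toReal_mono hvfin (measure_mono hsub)
    · exact setIntegral_nonneg measurableSet_Icc fun y _ => abs_nonneg _
    · have hint : IntegrableOn (fun y => |b y|) (Icc a₀ fun i => a₀ i + l₀) volume :=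
        hc.abs.integrableOn_Icc
      have hintc : IntegrableOn (fun _ => |b x| + D) (Icc a₀ fun i => a₀ i + l₀) volume :=
        integrableOn_const isCompact_Icc.measure_lt_top.ne
      calc (∫ y in Icc a₀ (fun i => a₀ i + l₀), |b y|)
          ≤ ∫ _ in Icc a₀ (fun i => a₀ i + l₀), (|b x| + D) :=
            setIntegral_mono_on hint hintc measurableSet_Icc
              (fun y hy => (hbd y (hsub hy)).2)
        _ = (volume (Icc a₀ fun i => a₀ i + l₀)).toReal * (|b x| + D) := by
            rw [setIntegral_const, smul_eq_mul]; rfl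
  -- the index type
  haveI hne : Nonempty {Q₀ : Set (Fin n → ℝ) // IsCube Q₀ ∧ x ∈ Q₀ ∧ Q₀ ⊆ Q} :=
    ⟨⟨Q, ⟨a, l, hl, hQeq⟩, hx, subset_rfl⟩⟩
  set F : {Q₀ : Set (Fin n → ℝ) // IsCube Q₀ ∧ x ∈ Q₀ ∧ Q₀ ⊆ Q} → ℝ :=
    fun i => (volume i.1).toReal ^ (α / n - 1) * ∫ y in i.1, |b y| with hFdef
  set G : {Q₀ : Set (Fin n → ℝ) // IsCube Q₀ ∧ x ∈ Q₀ ∧ Q₀ ⊆ Q} → ℝ :=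
    fun i => (volume i.1).toReal ^ ((0:ℝ) / n - 1) * ∫ y in i.1, |b y| with hGdef
  have hFloc : fracMaxLoc α Q b x = ⨆ i, F i := rfl
  have hGloc : fracMaxLoc 0 Q b x = ⨆ i, G i := rfl
  have hbxD : 0 ≤ |b x| + D := by positivity
  -- bounds for each term
  have hF : ∀ i, F i ≤ v ^ (α / n) * (|b x| + D) := by
    intro i
    obtain ⟨hv₀, hv₀v, hI0, hIle⟩ := cube_facts i.1 i.2.1 i.2.2.2
    set v₀ := (volume i.1).toReal
    calc F i ≤ v₀ ^ (α / n - 1) * (v₀ * (|b x| + D)) := by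
          exact mul_le_mul_of_nonneg_left hIle (Real.rpow_nonneg hv₀.le _)
      _ = v₀ ^ (α / n) * (|b x| + D) := by
          rw [Real.rpow_sub hv₀, Real.rpow_one]; field_simp
      _ ≤ v ^ (α / n) * (|b x| + D) := by
          exact mul_le_mul_of_nonneg_right
            (Real.rpow_le_rpow hv₀.le hv₀v (by positivity)) hbxD
  have hG : ∀ i, G i ≤ |b x| + D := by
    intro i
    obtain ⟨hv₀, hv₀v, hI0, hIle⟩ := cube_facts i.1 i.2.1 i.2.2.2
    set v₀ := (volume i.1).toReal
    calc G i ≤ v₀ ^ ((0:ℝ) / n - 1) * (v₀ * (|b x| + D)) := by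
          exact mul_le_mul_of_nonneg_left hIle (Real.rpow_nonneg hv₀.le _)
      _ = |b x| + D := by
          rw [show (0:ℝ) / n - 1 = -1 by norm_num, Real.rpow_neg_one]
          field_simp
  have hbddF : BddAbove (Set.range F) :=
    ⟨v ^ (α / n) * (|b x| + D), by rintro _ ⟨i, rfl⟩; exact hF i⟩
  have hbddG : BddAbove (Set.range G) :=
    ⟨|b x| + D, by rintro _ ⟨i, rfl⟩; exact hG i⟩
  have hvv : v ^ (-(α / n)) * v ^ (α / n) = 1 := by
    rw [← Real.rpow_add hv]; simp
  have hvneg : (0:ℝ) ≤ v ^ (-(α / n)) := Real.rpow_nonneg hv.le _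
  -- A ≤ B
  have hFG : ∀ i, v ^ (-(α / n)) * F i ≤ G i := by
    intro i
    obtain ⟨hv₀, hv₀v, hI0, hIle⟩ := cube_facts i.1 i.2.1 i.2.2.2
    set v₀ := (volume i.1).toReal
    have hcoef : v ^ (-(α / n)) * v₀ ^ (α / n - 1) ≤ v₀ ^ ((0:ℝ) / n - 1) := by
      rw [show (0:ℝ) / n - 1 = -1 by norm_num, Real.rpow_neg_one,
        Real.rpow_sub hv₀, Real.rpow_one, Real.rpow_neg hv.le]
      calc (v ^ (α / n))⁻¹ * (v₀ ^ (α / n) / v₀)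
          = (v₀ ^ (α / n) / v ^ (α / n)) * v₀⁻¹ := by ring
        _ ≤ 1 * v₀⁻¹ := by
            apply mul_le_mul_of_nonneg_right _ (by positivity)
            rw [div_le_one (by positivity)]
            exact Real.rpow_le_rpow hv₀.le hv₀v (by positivity)
        _ = v₀⁻¹ := one_mul _
    calc v ^ (-(α / n)) * F i = (v ^ (-(α / n)) * v₀ ^ (α / n - 1)) * ∫ y in i.1, |b y| := by
          rw [hFdef]; ring
      _ ≤ v₀ ^ ((0:ℝ) / n - 1) * ∫ y in i.1, |b y| :=
          mul_le_mul_of_nonneg_right hcoef hI0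
      _ = G i := rfl
  have hAB : v ^ (-(α / n)) * (⨆ i, F i) ≤ ⨆ i, G i := by
    have h1 : (⨆ i, F i) ≤ v ^ (α / n) * ⨆ i, G i := by
      apply ciSup_le
      intro i
      calc F i = v ^ (α / n) * (v ^ (-(α / n)) * F i) := by
            rw [← mul_assoc, mul_comm (v ^ (α / n)), hvv, one_mul]
        _ ≤ v ^ (α / n) * G i :=
            mul_le_mul_of_nonneg_left (hFG i) (by positivity)
        _ ≤ v ^ (α / n) * ⨆ i, G i :=
            mul_le_mul_of_nonneg_left (le_ciSup hbddG i) (by positivity)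
    calc v ^ (-(α / n)) * (⨆ i, F i) ≤ v ^ (-(α / n)) * (v ^ (α / n) * ⨆ i, G i) :=
          mul_le_mul_of_nonneg_left h1 hvneg
      _ = ⨆ i, G i := by rw [← mul_assoc, hvv, one_mul]
  -- lower bound on A
  have hQint : v * (|b x| - D) ≤ ∫ y in Q, |b y| := by
    have hint : IntegrableOn (fun y => |b y|) Q volume := by
      rw [hQeq]; exact hc.abs.integrableOn_Icc
    have hintc : IntegrableOn (fun _ => |b x| - D) Q volume := by
      rw [hQeq]; exact integrableOn_const isCompact_Icc.measure_lt_top.ne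
    have hmeas : MeasurableSet Q := by rw [hQeq]; exact measurableSet_Icc
    calc v * (|b x| - D) = ∫ _ in Q, (|b x| - D) := by
          rw [setIntegral_const, smul_eq_mul]; rfl
      _ ≤ ∫ y in Q, |b y| :=
          setIntegral_mono_on hintc hint hmeas (fun y hy => (hbd y hy).1)
  have hAlower : |b x| - D ≤ v ^ (-(α / n)) * (⨆ i, F i) := by
    set iQ : {Q₀ : Set (Fin n → ℝ) // IsCube Q₀ ∧ x ∈ Q₀ ∧ Q₀ ⊆ Q} :=
      ⟨Q, ⟨a, l, hl, hQeq⟩, hx, subset_rfl⟩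
    have hFiQ : v ^ (-(α / n)) * F iQ = v⁻¹ * ∫ y in Q, |b y| := by
      have : v ^ (-(α / n)) * v ^ (α / n - 1) = v⁻¹ := by
        rw [← Real.rpow_add hv, show -(α / n) + (α / n - 1) = -1 by ring,
          Real.rpow_neg_one]
      rw [hFdef]
      show v ^ (-(α / n)) * ((volume Q).toReal ^ (α / ↑n - 1) * ∫ y in Q, |b y|)
        = v⁻¹ * ∫ y in Q, |b y|
      rw [← hvdef, ← mul_assoc, this]
    calc |b x| - D = v⁻¹ * (v * (|b x| - D)) := by field_simp
      _ ≤ v⁻¹ * ∫ y in Q, |b y| :=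
          mul_le_mul_of_nonneg_left hQint (by positivity)
      _ = v ^ (-(α / n)) * F iQ := hFiQ.symm
      _ ≤ v ^ (-(α / n)) * (⨆ i, F i) :=
          mul_le_mul_of_nonneg_left (le_ciSup hbddF iQ) hvneg
  have hBA : (⨆ i, G i) ≤ v ^ (-(α / n)) * (⨆ i, F i) + 2 * D := by
    apply ciSup_le
    intro i
    have := hG i
    linarith [hAlower]
  rw [hFloc, hGloc]
  rw [abs_le]
  constructor
  · have := hAB
    have : -(2 * L * v ^ (β / n)) ≤ -(2 * D) := by rw [hDdef]; ring_nf; linarith [hAB]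
    nlinarith [hAB, hD0]
  · have : v ^ (-(α / n)) * (⨆ i, F i) - (⨆ i, G i) ≤ 0 := by linarith [hAB]
    have h2 : (0:ℝ) ≤ 2 * L * v ^ (β / n) := by positivity
    linarith
end
end

section
/- Let 0 < β < 1 and let b be locally integrable such that for some constant C₀, (1/|Q|^{1+β/n}) ∫_Q |b(x) − b_Q| dx ≤ C₀ for all cubes Q. Then b ∈ Λ̇_β(ℝⁿ), i.e., there is C (depending only on n, β, C₀) with |b(x) − b(y)| ≤ C|x−y|^β for a.e. x, y. Conversely, if b ∈ Λ̇_β(ℝⁿ) then the above mean-oscillation condition holds with C₀ ≲ ‖b‖_{Λ̇_β}. -/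
open MeasureTheory Set

noncomputable section

open Metric Filter
open scoped NNReal ENNReal Topology

section Stmt19Aux

variable {n : ℕ}

lemma cube_le (a : Fin n → ℝ) {l : ℝ} (hl : 0 ≤ l) : a ≤ fun i => a i + l :=
  fun _ => le_add_of_nonneg_right hl

lemma vol_cube (a : Fin n → ℝ) {l : ℝ} (hl : 0 ≤ l) :
    (volume (Icc a (fun i => a i + l))).toReal = l ^ n := by
  rw [Real.volume_Icc_pi_toReal (cube_le a hl)]
  simp

lemma vol_cube' (a : Fin n → ℝ) (l : ℝ) :
    volume (Icc a (fun i => a i + l)) = ENNReal.ofReal l ^ n := by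
  rw [Real.volume_Icc_pi]
  simp

lemma mem_cube_iff {a y : Fin n → ℝ} {l : ℝ} :
    y ∈ Icc a (fun i => a i + l) ↔ ∀ i, a i ≤ y i ∧ y i ≤ a i + l := by
  simp only [mem_Icc, Pi.le_def]
  exact ⟨fun ⟨h1, h2⟩ i => ⟨h1 i, h2 i⟩, fun h => ⟨fun i => (h i).1, fun i => (h i).2⟩⟩

lemma cube_eq_closedBall (a : Fin n → ℝ) {l : ℝ} (hl : 0 ≤ l) :
    Icc a (fun i => a i + l) = closedBall (fun i => a i + l / 2) (l / 2) := by
  ext y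
  rw [mem_closedBall, dist_pi_le_iff (by linarith), mem_cube_iff]
  constructor
  · intro h i
    rw [Real.dist_eq, abs_le]
    obtain ⟨h1, h2⟩ := h i
    constructor <;> linarith
  · intro h i
    have h' := h i
    rw [Real.dist_eq, abs_le] at h'
    constructor <;> linarith [h'.1, h'.2]

lemma cube_subset_closedBall {a x : Fin n → ℝ} {l : ℝ} (hl : 0 ≤ l)
    (hx : x ∈ Icc a (fun i => a i + l)) :
    Icc a (fun i => a i + l) ⊆ closedBall x l := by
  intro y hy
  rw [mem_closedBall, dist_pi_le_iff hl]
  intro i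
  obtain ⟨h1, h2⟩ := mem_cube_iff.1 hy i
  obtain ⟨h3, h4⟩ := mem_cube_iff.1 hx i
  rw [Real.dist_eq, abs_le]
  constructor <;> linarith

lemma ball_ratio (x : Fin n → ℝ) {r : ℝ} (hr : 0 ≤ r) :
    volume (closedBall x (3 * r)) ≤ ((6 : ℝ≥0) ^ n : ℝ≥0) * volume (closedBall x r) := by
  rw [Real.volume_pi_closedBall _ (by positivity), Real.volume_pi_closedBall _ hr]
  have h1 : (2 * (3 * r)) ^ Fintype.card (Fin n) = 3 ^ n * (2 * r) ^ n := by
    rw [Fintype.card_fin, ← mul_pow]; ring_nf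
  rw [h1, ENNReal.ofReal_mul (by positivity)]
  have h2 : ENNReal.ofReal ((3:ℝ) ^ n) = (3 : ℝ≥0∞) ^ n := by
    rw [ENNReal.ofReal_pow (by norm_num)]
    norm_num
  rw [h2, Fintype.card_fin]
  have h3 : ((6 : ℝ≥0) ^ n : ℝ≥0) = ((6 : ℝ≥0∞) ^ n) := by push_cast; ring
  rw [h3]
  exact mul_le_mul_left (pow_le_pow_left' (by norm_num : (3:ℝ≥0∞) ≤ 6) n) _

noncomputable def vFam (n : ℕ) : VitaliFamily (volume : Measure (Fin n → ℝ)) :=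
  Vitali.vitaliFamily volume (6 ^ n) (fun x => by
    refine Eventually.frequently ?_
    filter_upwards [self_mem_nhdsWithin] with r (hr : r ∈ Ioi (0:ℝ))
    exact ball_ratio x (le_of_lt hr))

lemma mem_vFam {x : Fin n → ℝ} {Q : Set (Fin n → ℝ)} (h1 : IsClosed Q)
    (h2 : (interior Q).Nonempty)
    (h3 : ∃ r, Q ⊆ closedBall x r ∧
      volume (closedBall x (3 * r)) ≤ ((6 : ℝ≥0) ^ n : ℝ≥0) * volume Q) :
    Q ∈ (vFam n).setsAt x := ⟨h1, h2, h3⟩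

lemma integrableOn_cube {b : (Fin n → ℝ) → ℝ} (hb : LocallyIntegrable b volume)
    (a a' : Fin n → ℝ) : IntegrableOn b (Icc a a') volume :=
  hb.integrableOn_isCompact isCompact_Icc

lemma pow_rpow_comm {x : ℝ} (hx : 0 ≤ x) (β : ℝ) (m : ℕ) :
    (x ^ m) ^ β = (x ^ β) ^ m := by
  rw [← Real.rpow_natCast x m, ← Real.rpow_mul hx, mul_comm, Real.rpow_mul hx,
    Real.rpow_natCast]

lemma vol_rpow {l : ℝ} (hl : 0 < l) (hn : 0 < n) (β : ℝ) :
    ((l : ℝ) ^ n) ^ (1 + β / n) = l ^ (n : ℝ) * l ^ β := by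
  have hn' : (n : ℝ) ≠ 0 := Nat.cast_ne_zero.2 hn.ne'
  rw [← Real.rpow_natCast l n, ← Real.rpow_mul hl.le, ← Real.rpow_add hl]
  congr 1
  field_simp

/-- one-step oscillation estimate for nested cubes -/
lemma osc_step {b : (Fin n → ℝ) → ℝ} (hb : LocallyIntegrable b volume)
    {C₀ β : ℝ} (hn : 0 < n)
    (H : ∀ Q : Set (Fin n → ℝ), IsCube Q →
      ∫ x in Q, |b x - avgOn Q b| ≤ C₀ * (volume Q).toReal ^ (1 + β / n))
    {a a' : Fin n → ℝ} {l l' : ℝ} (hl : 0 < l) (hl' : 0 < l')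
    (hsub : Icc a' (fun i => a' i + l') ⊆ Icc a (fun i => a i + l)) :
    |avgOn (Icc a' (fun i => a' i + l')) b - avgOn (Icc a (fun i => a i + l)) b| ≤
      (l' ^ n)⁻¹ * (C₀ * (l ^ (n : ℝ) * l ^ β)) := by
  set Q := Icc a (fun i => a i + l) with hQ
  set Q' := Icc a' (fun i => a' i + l') with hQ'
  set c := avgOn Q b with hc
  have hv' : (volume Q').toReal = l' ^ n := vol_cube a' hl'.le
  have hv'pos : (0:ℝ) < l' ^ n := by positivity
  have hbQ : IntegrableOn b Q volume := integrableOn_cube hb _ _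
  have hbQ' : IntegrableOn b Q' volume := integrableOn_cube hb _ _
  have hQfin : volume Q < ⊤ := isCompact_Icc.measure_lt_top
  have hQ'fin : volume Q' < ⊤ := isCompact_Icc.measure_lt_top
  have hgQ : IntegrableOn (fun y => |b y - c|) Q volume :=
    (hbQ.sub (integrableOn_const hQfin.ne)).abs
  have key : avgOn Q' b - c = (l' ^ n)⁻¹ * ∫ y in Q', (b y - c) := by
    rw [integral_sub hbQ' (integrableOn_const hQ'fin.ne), setIntegral_const, measureReal_def, hv',
      smul_eq_mul]
    rw [avgOn, hv']
    field_simp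
  rw [key, abs_mul, abs_of_nonneg (by positivity : (0:ℝ) ≤ (l' ^ n)⁻¹)]
  have h1 : |∫ y in Q', (b y - c)| ≤ ∫ y in Q', |b y - c| := by
    simpa [Real.norm_eq_abs] using
      norm_integral_le_integral_norm (μ := volume.restrict Q') (fun y => b y - c)
  have h2 : ∫ y in Q', |b y - c| ≤ ∫ y in Q, |b y - c| := by
    apply setIntegral_mono_set hgQ
    · exact Eventually.of_forall fun y => abs_nonneg _
    · exact HasSubset.Subset.eventuallyLE hsub
  have h3 : ∫ y in Q, |b y - c| ≤ C₀ * (l ^ (n : ℝ) * l ^ β) := by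
    have := H Q ⟨a, l, hl, hQ⟩
    rwa [vol_cube a hl.le, vol_rpow hl hn] at this
  have h0 : (0:ℝ) ≤ (l' ^ n)⁻¹ := by positivity
  calc (l' ^ n)⁻¹ * |∫ y in Q', (b y - c)| ≤ (l' ^ n)⁻¹ * ∫ y in Q, |b y - c| := by
        exact mul_le_mul_of_nonneg_left (h1.trans h2) h0
    _ ≤ (l' ^ n)⁻¹ * (C₀ * (l ^ (n : ℝ) * l ^ β)) := mul_le_mul_of_nonneg_left h3 h0

/-- corner of the half-size subcube of `Icc a (a+l)` containing `x` -/
noncomputable def corner (x a : Fin n → ℝ) (l : ℝ) : Fin n → ℝ :=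
  fun i => if x i ≤ a i + l / 2 then a i else a i + l / 2

lemma corner_mem {x a : Fin n → ℝ} {l : ℝ} (hl : 0 < l)
    (hx : x ∈ Icc a (fun i => a i + l)) :
    x ∈ Icc (corner x a l) (fun i => corner x a l i + l / 2) := by
  rw [mem_cube_iff] at hx ⊢
  intro i
  obtain ⟨h1, h2⟩ := hx i
  unfold corner
  split_ifs with h <;> constructor <;> linarith

lemma corner_sub {x a : Fin n → ℝ} {l : ℝ} (hl : 0 < l) :
    Icc (corner x a l) (fun i => corner x a l i + l / 2) ⊆ Icc a (fun i => a i + l) := by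
  apply Icc_subset_Icc <;> intro i <;> dsimp only [corner] <;> split_ifs with h <;>
    linarith

/-- nested sequence of corners -/
noncomputable def seq (x a : Fin n → ℝ) (l : ℝ) : ℕ → Fin n → ℝ
  | 0 => a
  | m + 1 => corner x (seq x a l m) (l / 2 ^ m)

lemma seq_mem {x a : Fin n → ℝ} {l : ℝ} (hl : 0 < l)
    (hx : x ∈ Icc a (fun i => a i + l)) (m : ℕ) :
    x ∈ Icc (seq x a l m) (fun i => seq x a l m i + l / 2 ^ m) := by
  induction m with
  | zero => simpa [_root_.seq] using hx
  | succ m ih =>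
      have h := corner_mem (by positivity : (0:ℝ) < l / 2 ^ m) ih
      have he : l / 2 ^ m / 2 = l / 2 ^ (m + 1) := by rw [pow_succ]; ring
      rw [he] at h
      exact h

lemma seq_sub {x a : Fin n → ℝ} {l : ℝ} (hl : 0 < l) (m : ℕ) :
    Icc (seq x a l (m + 1)) (fun i => seq x a l (m + 1) i + l / 2 ^ (m + 1)) ⊆
      Icc (seq x a l m) (fun i => seq x a l m i + l / 2 ^ m) := by
  have h := corner_sub (x := x) (a := seq x a l m) (by positivity : (0:ℝ) < l / 2 ^ m)
  have he : l / 2 ^ m / 2 = l / 2 ^ (m + 1) := by rw [pow_succ]; ring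
  rw [he] at h
  exact h

lemma avg_close {b : (Fin n → ℝ) → ℝ} (hb : LocallyIntegrable b volume)
    {C₀ β : ℝ} (hβ0 : 0 < β) (hn : 0 < n)
    (H : ∀ Q : Set (Fin n → ℝ), IsCube Q →
      ∫ x in Q, |b x - avgOn Q b| ≤ C₀ * (volume Q).toReal ^ (1 + β / n))
    {x : Fin n → ℝ}
    (hx : Tendsto (fun Q => ⨍ y in Q, b y) ((vFam n).filterAt x) (𝓝 (b x)))
    {a : Fin n → ℝ} {l : ℝ} (hl : 0 < l) (hxQ : x ∈ Icc a (fun i => a i + l)) :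
    |avgOn (Icc a (fun i => a i + l)) b - b x| ≤
      (2 ^ n * C₀ * l ^ β) / (1 - (1/2 : ℝ) ^ β) := by
  set r : ℝ := (1/2 : ℝ) ^ β with hr
  have hrlt : r < 1 := Real.rpow_lt_one (by norm_num) (by norm_num) hβ0
  set D : ℝ := 2 ^ n * C₀ * l ^ β with hD
  set Qm : ℕ → Set (Fin n → ℝ) :=
    fun m => Icc (seq x a l m) (fun i => seq x a l m i + l / 2 ^ m) with hQm
  set c : ℕ → ℝ := fun m => avgOn (Qm m) b with hc
  have hlm : ∀ m : ℕ, (0:ℝ) < l / 2 ^ m := fun m => by positivity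
  have key : ∀ m : ℕ,
      ((l / 2 ^ (m+1)) ^ n)⁻¹ * (C₀ * ((l / 2 ^ m) ^ (n:ℝ) * (l / 2 ^ m) ^ β)) = D * r ^ m := by
    intro m
    have hu : (0:ℝ) < l / 2 ^ m := hlm m
    have e1 : l / 2 ^ (m+1) = (l / 2 ^ m) / 2 := by rw [pow_succ]; ring
    have e2 : (l / 2 ^ m : ℝ) ^ β = l ^ β * r ^ m := by
      have e3 : l / 2 ^ m = l * (1/2 : ℝ) ^ m := by
        rw [one_div, inv_pow, div_eq_mul_inv]
      rw [e3, Real.mul_rpow hl.le (by positivity),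
        pow_rpow_comm (by norm_num : (0:ℝ) ≤ 1/2)]
    rw [e1, div_pow, Real.rpow_natCast, e2, hD]
    have h2n : ((2:ℝ) ^ n) ≠ 0 := by positivity
    have hun : ((l / 2 ^ m : ℝ) ^ n) ≠ 0 := by positivity
    field_simp
  have hstep : ∀ m, dist (c m) (c (m+1)) ≤ D * r ^ m := by
    intro m
    rw [Real.dist_eq, abs_sub_comm, ← key m]
    exact osc_step hb hn H (hlm m) (hlm (m+1)) (seq_sub hl m)
  have hmem : ∀ m, Qm m ∈ (vFam n).setsAt x := by
    intro m
    apply mem_vFam isClosed_Icc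
    · rw [cube_eq_closedBall _ (hlm m).le]
      exact (nonempty_ball.2 (by positivity)).mono ball_subset_interior_closedBall
    · refine ⟨l / 2 ^ m, cube_subset_closedBall (hlm m).le (seq_mem hl hxQ m), ?_⟩
      rw [Real.volume_pi_closedBall _ (by positivity), vol_cube']
      have e4 : (2*(3*(l / 2 ^ m))) ^ Fintype.card (Fin n) = 6 ^ n * (l / 2 ^ m) ^ n := by
        rw [Fintype.card_fin, ← mul_pow]; ring_nf
      rw [e4, ENNReal.ofReal_mul (by positivity), ENNReal.ofReal_pow (hlm m).le]
      have h6 : ENNReal.ofReal ((6:ℝ)^n) = (((6:ℝ≥0)^n : ℝ≥0) : ℝ≥0∞) := by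
        rw [ENNReal.ofReal_pow (by norm_num)]
        norm_num
      rw [h6]
  have htend_sets : Tendsto Qm atTop ((vFam n).filterAt x) := by
    rw [VitaliFamily.tendsto_filterAt_iff]
    refine ⟨Eventually.of_forall hmem, fun ε hε => ?_⟩
    have hto : Tendsto (fun m : ℕ => l / 2 ^ m) atTop (𝓝 0) := by
      have := (tendsto_pow_atTop_nhds_zero_of_lt_one (by norm_num : (0:ℝ) ≤ 1/2)
        (by norm_num : (1/2:ℝ) < 1)).const_mul l
      simp only [mul_zero] at this
      convert this using 2 with m
      rw [one_div, inv_pow, div_eq_mul_inv]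
    filter_upwards [hto.eventually_le_const hε] with m hm
    exact (cube_subset_closedBall (hlm m).le (seq_mem hl hxQ m)).trans
      (closedBall_subset_closedBall hm)
  have htend : Tendsto c atTop (𝓝 (b x)) := by
    have h := hx.comp htend_sets
    have he : c = (fun Q => ⨍ y in Q, b y) ∘ Qm := by
      funext m
      rw [Function.comp_apply, setAverage_eq, smul_eq_mul]
      rfl
    rwa [he]
  have hfin := dist_le_of_le_geometric_of_tendsto₀ r D hrlt hstep htend
  have hQ0 : Qm 0 = Icc a (fun i => a i + l) := by
    show Icc (_root_.seq x a l 0) (fun i => _root_.seq x a l 0 i + l / 2 ^ 0) = _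
    norm_num
    rfl
  have hc0 : c 0 = avgOn (Icc a (fun i => a i + l)) b := by
    show avgOn (Qm 0) b = _
    rw [hQ0]
  rw [Real.dist_eq, hc0] at hfin
  exact hfin

lemma two_point {b : (Fin n → ℝ) → ℝ} (hb : LocallyIntegrable b volume)
    {C₀ β : ℝ} (hβ0 : 0 < β) (hn : 0 < n)
    (H : ∀ Q : Set (Fin n → ℝ), IsCube Q →
      ∫ x in Q, |b x - avgOn Q b| ≤ C₀ * (volume Q).toReal ^ (1 + β / n))
    {x y : Fin n → ℝ}
    (hx : Tendsto (fun Q => ⨍ w in Q, b w) ((vFam n).filterAt x) (𝓝 (b x)))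
    (hy : Tendsto (fun Q => ⨍ w in Q, b w) ((vFam n).filterAt y) (𝓝 (b y))) :
    |b x - b y| ≤ (2 * (2 ^ n * C₀) / (1 - (1/2 : ℝ) ^ β) + 1) * ‖x - y‖ ^ β := by
  have hrlt : (1/2 : ℝ) ^ β < 1 := Real.rpow_lt_one (by norm_num) (by norm_num) hβ0
  have h1r : (0:ℝ) < 1 - (1/2 : ℝ) ^ β := by linarith
  rcases eq_or_ne x y with rfl | hne
  · simp [Real.zero_rpow hβ0.ne']
  · set l := dist x y with hldef
    have hl : 0 < l := dist_pos.2 hne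
    set a : Fin n → ℝ := fun i => min (x i) (y i) with ha
    have hco : ∀ i, |x i - y i| ≤ l := by
      intro i
      have := dist_le_pi_dist x y i
      rwa [Real.dist_eq] at this
    have hxQ : x ∈ Icc a (fun i => a i + l) := by
      rw [mem_cube_iff]
      intro i
      have := abs_le.1 (hco i)
      rcases le_total (x i) (y i) with h | h <;>
        simp only [ha, min_eq_left h, min_eq_right h] <;> constructor <;> linarith [this.1, this.2]
    have hyQ : y ∈ Icc a (fun i => a i + l) := by
      rw [mem_cube_iff]
      intro i
      have := abs_le.1 (hco i)
      rcases le_total (x i) (y i) with h | h <;>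
        simp only [ha, min_eq_left h, min_eq_right h] <;> constructor <;> linarith [this.1, this.2]
    have h1 := avg_close hb hβ0 hn H hx hl hxQ
    have h2 := avg_close hb hβ0 hn H hy hl hyQ
    have hnorm : ‖x - y‖ = l := by rw [← dist_eq_norm]
    have hbβ : (0:ℝ) ≤ l ^ β := Real.rpow_nonneg hl.le β
    have habs : |b x - b y| ≤ |avgOn (Icc a (fun i => a i + l)) b - b x| +
        |avgOn (Icc a (fun i => a i + l)) b - b y| := by
      rw [abs_sub_comm (avgOn _ b) (b x)]
      exact abs_sub_le (b x) (avgOn _ b) (b y)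
    rw [hnorm]
    have hfac : 2 * ((2 ^ n * C₀ * l ^ β) / (1 - (1/2 : ℝ) ^ β)) =
        (2 * (2 ^ n * C₀) / (1 - (1/2 : ℝ) ^ β)) * l ^ β := by ring
    nlinarith [hbβ]

lemma C0_nonneg {b : (Fin n → ℝ) → ℝ} {C₀ β : ℝ}
    (H : ∀ Q : Set (Fin n → ℝ), IsCube Q →
      ∫ x in Q, |b x - avgOn Q b| ≤ C₀ * (volume Q).toReal ^ (1 + β / n)) :
    0 ≤ C₀ := by
  have h := H (Icc (0 : Fin n → ℝ) (fun i => (0 : Fin n → ℝ) i + 1)) ⟨0, 1, one_pos, rfl⟩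
  have hv : (volume (Icc (0 : Fin n → ℝ) (fun i => (0 : Fin n → ℝ) i + 1))).toReal = 1 := by
    rw [vol_cube (0 : Fin n → ℝ) (by norm_num : (0:ℝ) ≤ 1)]
    norm_num
  rw [hv, Real.one_rpow, mul_one] at h
  exact le_trans (integral_nonneg fun z => abs_nonneg _) h

theorem stmt19_forward {n : ℕ} (hn : 0 < n) (β : ℝ) (hβ0 : 0 < β) (hβ1 : β < 1) :
    ∀ (b : (Fin n → ℝ) → ℝ), LocallyIntegrable b volume → ∀ C₀ : ℝ,
      (∀ Q : Set (Fin n → ℝ), IsCube Q →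
        ∫ x in Q, |b x - avgOn Q b| ≤ C₀ * (volume Q).toReal ^ (1 + β / n)) →
      ∃ C > 0, ∀ᵐ z : (Fin n → ℝ) × (Fin n → ℝ) ∂((volume : Measure (Fin n → ℝ)).prod volume),
        |b z.1 - b z.2| ≤ C * ‖z.1 - z.2‖ ^ β := by
  intro b hb C₀ H
  have hC₀ : 0 ≤ C₀ := C0_nonneg H
  have hrlt : (1/2 : ℝ) ^ β < 1 := Real.rpow_lt_one (by norm_num) (by norm_num) hβ0
  have h1r : (0:ℝ) < 1 - (1/2 : ℝ) ^ β := by linarith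
  refine ⟨2 * (2 ^ n * C₀) / (1 - (1/2 : ℝ) ^ β) + 1, by positivity, ?_⟩
  have hG := (vFam n).ae_tendsto_average hb
  have h1 := (Measure.quasiMeasurePreserving_fst
    (μ := (volume : Measure (Fin n → ℝ))) (ν := (volume : Measure (Fin n → ℝ)))).ae hG
  have h2 := (Measure.quasiMeasurePreserving_snd
    (μ := (volume : Measure (Fin n → ℝ))) (ν := (volume : Measure (Fin n → ℝ)))).ae hG
  filter_upwards [h1, h2] with z hz1 hz2
  exact two_point hb hβ0 hn H hz1 hz2

theorem stmt19_backward {n : ℕ} (hn : 0 < n) (β : ℝ) (hβ0 : 0 < β) (hβ1 : β < 1) :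
    ∃ C > 0, ∀ (b : (Fin n → ℝ) → ℝ) (L : ℝ), 0 ≤ L →
      (∀ x y, |b x - b y| ≤ L * ‖x - y‖ ^ β) →
      ∀ Q : Set (Fin n → ℝ), IsCube Q →
        ∫ x in Q, |b x - avgOn Q b| ≤ C * L * (volume Q).toReal ^ (1 + β / n) := by
  refine ⟨1, one_pos, ?_⟩
  intro b L hL hb Q hQ
  obtain ⟨a, l, hl, rfl⟩ := hQ
  set Q := Icc a (fun i => a i + l) with hQdef
  -- continuity of b
  have hcont : Continuous b := by
    rw [Metric.continuous_iff]
    intro x ε hε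
    refine ⟨(ε / (L + 1)) ^ (1/β), Real.rpow_pos_of_pos (by positivity) _, fun y hy => ?_⟩
    have h1 := hb y x
    have hdn : dist y x = ‖y - x‖ := dist_eq_norm y x
    have h2 : ‖y - x‖ ^ β < ((ε / (L + 1)) ^ (1/β)) ^ β := by
      apply Real.rpow_lt_rpow (norm_nonneg _) _ hβ0
      rw [← hdn]; exact hy
    have h3 : ((ε / (L + 1)) ^ (1/β) : ℝ) ^ β = ε / (L + 1) := by
      rw [one_div, Real.rpow_inv_rpow (by positivity) hβ0.ne']
    rw [h3] at h2
    have h4 : L * (ε / (L + 1)) < ε := by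
      rw [mul_comm, div_mul_eq_mul_div, div_lt_iff₀ (by positivity)]
      nlinarith
    calc dist (b y) (b x) = |b y - b x| := Real.dist_eq _ _
      _ ≤ L * ‖y - x‖ ^ β := h1
      _ ≤ L * (ε / (L + 1)) := mul_le_mul_of_nonneg_left h2.le hL
      _ < ε := h4
  have hbi : IntegrableOn b Q volume := hcont.continuousOn.integrableOn_compact isCompact_Icc
  have hv : (volume Q).toReal = l ^ n := vol_cube a hl.le
  have hvpos : (0:ℝ) < l ^ n := by positivity
  have hQfin : volume Q < ⊤ := isCompact_Icc.measure_lt_top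
  -- pointwise bound
  have hpt : ∀ x ∈ Q, |b x - avgOn Q b| ≤ L * l ^ β := by
    intro x hx
    have key : b x - avgOn Q b = (l ^ n)⁻¹ * ∫ w in Q, (b x - b w) := by
      rw [integral_sub (integrableOn_const (C := b x) hQfin.ne) hbi, setIntegral_const, measureReal_def, hv,
        smul_eq_mul, avgOn, hv]
      field_simp
    rw [key, abs_mul, abs_of_nonneg (by positivity : (0:ℝ) ≤ ((l:ℝ) ^ n)⁻¹)]
    have h1 : |∫ w in Q, (b x - b w)| ≤ ∫ w in Q, |b x - b w| := by
      simpa [Real.norm_eq_abs] using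
        norm_integral_le_integral_norm (μ := volume.restrict Q) (fun w => b x - b w)
    have h2 : ∫ w in Q, |b x - b w| ≤ ∫ (_ : Fin n → ℝ) in Q, L * l ^ β := by
      apply setIntegral_mono_on
      · exact ((integrableOn_const hQfin.ne).sub hbi).abs
      · exact integrableOn_const hQfin.ne
      · exact measurableSet_Icc
      · intro w hw
        refine (hb x w).trans ?_
        apply mul_le_mul_of_nonneg_left _ hL
        apply Real.rpow_le_rpow (norm_nonneg _) _ hβ0.le
        have hxy : ∀ i, |x i - w i| ≤ l := by
          intro i
          obtain ⟨ha1, ha2⟩ := mem_cube_iff.1 hx i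
          obtain ⟨hb1, hb2⟩ := mem_cube_iff.1 hw i
          rw [abs_le]; constructor <;> linarith
        have : dist x w ≤ l := by
          rw [dist_pi_le_iff hl.le]
          intro i
          rw [Real.dist_eq]; exact hxy i
        rwa [dist_eq_norm] at this
    have h3 : ∫ (_ : Fin n → ℝ) in Q, L * l ^ β = l ^ n * (L * l ^ β) := by
      rw [setIntegral_const, measureReal_def, hv, smul_eq_mul]
    calc ((l:ℝ) ^ n)⁻¹ * |∫ w in Q, (b x - b w)| ≤ (l ^ n)⁻¹ * (l ^ n * (L * l ^ β)) := by
          apply mul_le_mul_of_nonneg_left _ (by positivity)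
          rw [← h3]
          exact h1.trans h2
      _ = L * l ^ β := by field_simp
  -- integrate
  have hint : ∫ x in Q, |b x - avgOn Q b| ≤ ∫ (_ : Fin n → ℝ) in Q, L * l ^ β := by
    apply setIntegral_mono_on
    · exact (hbi.sub (integrableOn_const hQfin.ne)).abs
    · exact integrableOn_const hQfin.ne
    · exact measurableSet_Icc
    · exact hpt
  rw [setIntegral_const, measureReal_def, hv, smul_eq_mul] at hint
  refine hint.trans ?_
  rw [hv, vol_rpow hl hn, one_mul, Real.rpow_natCast]
  ring_nf
  exact le_refl _

end Stmt19Aux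

theorem stmt19 {n : ℕ} (hn : 0 < n) (β : ℝ) (hβ0 : 0 < β) (hβ1 : β < 1) :
    (∀ (b : (Fin n → ℝ) → ℝ), LocallyIntegrable b volume → ∀ C₀ : ℝ,
      (∀ Q : Set (Fin n → ℝ), IsCube Q →
        ∫ x in Q, |b x - avgOn Q b| ≤ C₀ * (volume Q).toReal ^ (1 + β / n)) →
      ∃ C > 0, ∀ᵐ z : (Fin n → ℝ) × (Fin n → ℝ) ∂((volume : Measure (Fin n → ℝ)).prod volume),
        |b z.1 - b z.2| ≤ C * ‖z.1 - z.2‖ ^ β) ∧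
    (∃ C > 0, ∀ (b : (Fin n → ℝ) → ℝ) (L : ℝ), 0 ≤ L →
      (∀ x y, |b x - b y| ≤ L * ‖x - y‖ ^ β) →
      ∀ Q : Set (Fin n → ℝ), IsCube Q →
        ∫ x in Q, |b x - avgOn Q b| ≤ C * L * (volume Q).toReal ^ (1 + β / n)) := by
  exact ⟨stmt19_forward hn β hβ0 hβ1, stmt19_backward hn β hβ0 hβ1⟩
end
end
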